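/- arXiv:1107.2411 — 2 statements merged into one kernel-verified Lean document; each statement's English description precedes it below -/
import Mathlib

section
/- Let f, g : [0,1] → [0,1] satisfy f'(r)(1−2g(r)) = 0 and f(r)g(r)+(1−f(r))(1−g(r)) > 0 for all r. On B × (D² \ {0}) with polar coordinates (r, φ) on D², let α be a connection form for a vector field X_B on B (α(X_B)=1, ι_{X_B} dα = 0). Define η = f(r) dφ + (1−f(r)) α and V = g(r) ∂/∂φ + (1−g(r)) X_B. Then η(V) > 0 and ι_V dη = 0. -/
/-- On `B × (D² \ {0})` with polar coordinates `(r, φ)`, let `α` be a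
connection form for `X_B` on `B` (`α(X_B) = 1`, `ι_{X_B} dα = 0`), and let
`f, g : [0,1] → [0,1]` satisfy `f'(r)(1−2g(r)) = 0` and
`f(r)g(r)+(1−f(r))(1−g(r)) > 0`.  Then `η = f(r) dφ + (1−f(r)) α` and
`V = g(r) ∂/∂φ + (1−g(r)) X_B` satisfy `η(V) > 0` and `ι_V dη = 0`, where
`dη = f'(r) dr ∧ dφ − f'(r) dr ∧ α + (1−f(r)) dα`.  We state this pointwise on the
tangent space `E` at a point, with `dr, dφ, α` given as functionals, `dα` an
alternating form, `X_B` the binding field and `∂/∂φ` the angular field. -/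
theorem open_book_gluing_connection
    {E : Type*} [NormedAddCommGroup E] [NormedSpace ℝ E]
    (dr dphi a : E →L[ℝ] ℝ) (da : E →L[ℝ] E →L[ℝ] ℝ)
    (XB Vphi : E)
    (halt : ∀ v, da v v = 0)
    -- α is a connection form for X_B:
    (haXB : a XB = 1) (hdaXB : ∀ w, da XB w = 0)
    -- X_B is tangent to B: no dr, dφ components:
    (hdrXB : dr XB = 0) (hdphiXB : dphi XB = 0)
    -- ∂/∂φ is the angular field: dφ(∂/∂φ) = 1, dr(∂/∂φ) = 0, and α, dα are
    -- pulled back from B: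
    (hdphiV : dphi Vphi = 1) (hdrV : dr Vphi = 0) (haV : a Vphi = 0)
    (hdaV : ∀ w, da Vphi w = 0)
    -- values of the gluing functions at the given radius:
    (f g f' : ℝ)
    (hf : f ∈ Set.Icc (0:ℝ) 1) (hg : g ∈ Set.Icc (0:ℝ) 1)
    (hfg : f' * (1 - 2 * g) = 0)
    (hpos : 0 < f * g + (1 - f) * (1 - g)) :
    (0 < (f • dphi + (1 - f) • a) (g • Vphi + (1 - g) • XB)) ∧
    (∀ w : E,
      (f' * (dr (g • Vphi + (1 - g) • XB) * dphi w - dr w * dphi (g • Vphi + (1 - g) • XB))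
        - f' * (dr (g • Vphi + (1 - g) • XB) * a w - dr w * a (g • Vphi + (1 - g) • XB))
        + (1 - f) * da (g • Vphi + (1 - g) • XB) w) = 0) := by
  constructor
  · simp only [ContinuousLinearMap.add_apply, ContinuousLinearMap.smul_apply, map_add, map_smul,
      hdphiV, hdphiXB, haV, haXB, smul_eq_mul]
    linarith [hpos]
  · intro w
    simp only [map_add, map_smul, hdrV, hdrXB, hdphiV, hdphiXB, haV, haXB, hdaV, hdaXB,
      ContinuousLinearMap.add_apply, ContinuousLinearMap.smul_apply, smul_eq_mul,
      ContinuousLinearMap.zero_apply]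
    linear_combination dr w * hfg
end

section
/- Let α be a presymplectic confoliation form on a closed M^{2n+1} (dα has rank 2n everywhere, α(R) ≥ 0 for the Reeb field R of dα) and suppose R admits a connection form η (η(R)=1, ι_R dη = 0). Then for all sufficiently small ε > 0 the form α + ε η is a contact form. -/
/-!
Since `ι_R dα = ι_R dη = 0` and `η(R) = 1`, both `(α + εη)(R) ≥ ε > 0` and
`ι_R d(α + εη) = 0` hold for every `ε > 0`. Nondegeneracy of `dα + ε dη` on the complement
`range P` is the content: on the compact set of pairs `(x, u)` with `u` a unit vector of
`range (P x)`, the functional `w ↦ dα x u (P x w)` never vanishes, and not vanishing is an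
open condition, so by the tube lemma it survives the perturbation by `ε dη` for all small `ε`.
-/

open Filter Topology

theorem IsCompact.eventually_forall_add_smul_ne_zero {X F : Type*} [TopologicalSpace X]
    [TopologicalSpace F] [T1Space F] [AddCommMonoid F] [Module ℝ F] [ContinuousAdd F]
    [ContinuousSMul ℝ F] {K : Set X} (hK : IsCompact K) {A B : X → F} (hA : Continuous A)
    (hB : Continuous B) (hA0 : ∀ p ∈ K, A p ≠ 0) :
    ∀ᶠ ε in 𝓝 (0 : ℝ), ∀ p ∈ K, A p + ε • B p ≠ 0 := by
  refine hK.eventually_forall_of_forall_eventually fun p hp => ?_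
  have hcont : Continuous fun z : ℝ × X => A z.2 + z.1 • B z.2 :=
    (hA.comp continuous_snd).add (continuous_fst.smul (hB.comp continuous_snd))
  exact hcont.continuousAt.eventually_ne (by simpa using hA0 p hp)

theorem Filter.Eventually.exists_forall_of_pos_of_le {p : ℝ → Prop}
    (h : ∀ᶠ ε in 𝓝 (0 : ℝ), p ε) : ∃ ε₀, 0 < ε₀ ∧ ∀ ε, 0 < ε → ε ≤ ε₀ → p ε := by
  obtain ⟨ε₀, hε₀, hsub⟩ := mem_nhdsGT_iff_exists_Ioc_subset.mp (nhdsWithin_le_nhds h)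
  exact ⟨ε₀, hε₀, fun ε hε hle => hsub ⟨hε, hle⟩⟩

theorem ContinuousLinearMap.exists_mem_range_apply_ne_zero_iff {S E F : Type*} [Semiring S]
    [AddCommMonoid E] [Module S E] [TopologicalSpace E] [AddCommMonoid F] [Module S F]
    [TopologicalSpace F] (P : E →L[S] E) (f : E →L[S] F) :
    (∃ w ∈ LinearMap.range (P : E →ₗ[S] E), f w ≠ 0) ↔ f.comp P ≠ 0 := by
  simp only [LinearMap.mem_range, ContinuousLinearMap.coe_coe, ne_eq,
    ContinuousLinearMap.ext_iff, ContinuousLinearMap.comp_apply,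
    zero_apply, not_forall]
  constructor
  · rintro ⟨_, ⟨w, rfl⟩, hw⟩
    exact ⟨w, hw⟩
  · rintro ⟨w, hw⟩
    exact ⟨P w, ⟨w, rfl⟩, hw⟩

theorem isCompact_unit_fixedPoints {M E : Type*} [TopologicalSpace M] [CompactSpace M]
    [NormedAddCommGroup E] [NormedSpace ℝ E] [ProperSpace E] {P : M → E →L[ℝ] E}
    (hP : Continuous P) : IsCompact {p : M × E | ‖p.2‖ = 1 ∧ P p.1 p.2 = p.2} := by
  refine (isCompact_univ.prod (isCompact_sphere (0 : E) 1)).of_isClosed_subset ?_ ?_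
  · exact (isClosed_eq continuous_snd.norm continuous_const).inter
      (isClosed_eq ((hP.comp continuous_fst).clm_apply continuous_snd) continuous_snd)
  · rintro ⟨x, v⟩ ⟨hv, -⟩
    exact ⟨Set.mem_univ x, by simpa using hv⟩

theorem presymplectic_confoliation_plus_small_connection_is_contact_general
    {M : Type*} [TopologicalSpace M] [CompactSpace M]
    {E : Type*} [NormedAddCommGroup E] [NormedSpace ℝ E] [FiniteDimensional ℝ E]
    (R : M → E)
    (α η : M → E →L[ℝ] ℝ)
    (dα dη : M → E →L[ℝ] E →L[ℝ] ℝ) (hdα : Continuous dα) (hdη : Continuous dη)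
    (hReeb : ∀ x w, dα x (R x) w = 0)
    (hconfol : ∀ x, 0 ≤ α x (R x))
    (hconn1 : ∀ x, η x (R x) = 1)
    (hconn2 : ∀ x w, dη x (R x) w = 0)
    (P : M → E →L[ℝ] E) (hP : Continuous P)
    (hPproj : ∀ x, (P x).comp (P x) = P x)
    (hnondeg : ∀ x, ∀ v ∈ LinearMap.range (P x : E →ₗ[ℝ] E), v ≠ 0 →
      ∃ w ∈ LinearMap.range (P x : E →ₗ[ℝ] E), dα x v w ≠ 0) :
    ∃ ε₀ : ℝ, 0 < ε₀ ∧ ∀ ε : ℝ, 0 < ε → ε ≤ ε₀ →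
      (∀ x, 0 < (α x + ε • η x) (R x)) ∧
      (∀ x w, (dα x + ε • dη x) (R x) w = 0) ∧
      (∀ x, ∀ v ∈ LinearMap.range (P x : E →ₗ[ℝ] E), v ≠ 0 →
        ∃ w ∈ LinearMap.range (P x : E →ₗ[ℝ] E), (dα x + ε • dη x) v w ≠ 0) := by
  have hrange x v : v ∈ LinearMap.range (P x : E →ₗ[ℝ] E) ↔ P x v = v :=
    LinearMap.IsIdempotentElem.mem_range_iff
      (ContinuousLinearMap.IsIdempotentElem.toLinearMap (hPproj x))
  set K := {p : M × E | ‖p.2‖ = 1 ∧ P p.1 p.2 = p.2}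
  have hsmall : ∀ᶠ ε in 𝓝 (0 : ℝ), ∀ p ∈ K,
      (dα p.1 p.2).comp (P p.1) + ε • (dη p.1 p.2).comp (P p.1) ≠ 0 := by
    refine (isCompact_unit_fixedPoints hP).eventually_forall_add_smul_ne_zero
      (((hdα.comp continuous_fst).clm_apply continuous_snd).clm_comp (hP.comp continuous_fst))
      (((hdη.comp continuous_fst).clm_apply continuous_snd).clm_comp (hP.comp continuous_fst))
      fun ⟨x, u⟩ ⟨hu, hPu⟩ => ?_
    have hu0 : u ≠ 0 := by rintro rfl; simp at hu
    exact (ContinuousLinearMap.exists_mem_range_apply_ne_zero_iff _ _).mp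
      (hnondeg x u ((hrange x u).mpr hPu) hu0)
  obtain ⟨ε₀, hε₀, hε₀small⟩ := hsmall.exists_forall_of_pos_of_le
  refine ⟨ε₀, hε₀, fun ε hε hεle => ⟨fun x => ?_, fun x w => ?_, fun x v hv hv0 => ?_⟩⟩
  · simp only [add_apply, smul_apply, hconn1, smul_eq_mul, mul_one]
    linarith [hconfol x]
  · simp [hReeb, hconn2]
  · have hnv : ‖v‖ ≠ 0 := norm_ne_zero_iff.mpr hv0
    have huK : (x, ‖v‖⁻¹ • v) ∈ K :=
      ⟨by simp [norm_smul, hv0], by simp [(hrange x v).mp hv]⟩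
    have hscale : ((dα x + ε • dη x) v).comp (P x) =
        ‖v‖ • ((dα x + ε • dη x) (‖v‖⁻¹ • v)).comp (P x) := by
      rw [map_smul, ContinuousLinearMap.smul_comp, smul_inv_smul₀ hnv]
    rw [ContinuousLinearMap.exists_mem_range_apply_ne_zero_iff, hscale]
    refine smul_ne_zero hnv ?_
    simpa only [add_apply, smul_apply, ContinuousLinearMap.add_comp,
      ContinuousLinearMap.smul_comp] using hε₀small ε hε hεle _ huK

/-- Let `α` be a presymplectic confoliation form on a closed `M^{2n+1}`
(`dα` of rank `2n` everywhere, `α(R) ≥ 0` for the Reeb field `R` of `dα`) and suppose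
`R` admits a connection form `η` (`η(R) = 1`, `ι_R dη = 0`).  Then for all
sufficiently small `ε > 0` the form `α + ε η` is a contact form: `(α+εη)(R) > 0`,
`ι_R d(α+εη) = 0`, and `d(α+εη) = dα + ε dη` is nondegenerate on a complement of `R`.
Trivialized-bundle conventions: `M` compact, fibre a finite-dimensional normed space
`E`, the differentials `dα`, `dη` given as continuous families of alternating forms,
and the complement of `R` given as `range (P x)` for a continuous idempotent family
`P` with `ker (P x) = span (R x)`. -/
theorem presymplectic_confoliation_plus_small_connection_is_contact
    {M : Type*} [TopologicalSpace M] [CompactSpace M] [Nonempty M]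
    {E : Type*} [NormedAddCommGroup E] [NormedSpace ℝ E] [FiniteDimensional ℝ E]
    (n : ℕ) (hdim : Module.finrank ℝ E = 2 * n + 1)
    (R : M → E) (hR : Continuous R) (hRne : ∀ x, R x ≠ 0)
    (α η : M → E →L[ℝ] ℝ) (hα : Continuous α) (hη : Continuous η)
    (dα dη : M → E →L[ℝ] E →L[ℝ] ℝ) (hdα : Continuous dα) (hdη : Continuous dη)
    (hdαalt : ∀ x v, dα x v v = 0) (hdηalt : ∀ x v, dη x v v = 0)
    (hReeb : ∀ x w, dα x (R x) w = 0)
    (hconfol : ∀ x, 0 ≤ α x (R x))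
    (hconn1 : ∀ x, η x (R x) = 1)
    (hconn2 : ∀ x w, dη x (R x) w = 0)
    (P : M → E →L[ℝ] E) (hP : Continuous P)
    (hPproj : ∀ x, (P x).comp (P x) = P x)
    (hPker : ∀ x, LinearMap.ker (P x : E →ₗ[ℝ] E) = Submodule.span ℝ {R x})
    (hnondeg : ∀ x, ∀ v ∈ LinearMap.range (P x : E →ₗ[ℝ] E), v ≠ 0 →
      ∃ w ∈ LinearMap.range (P x : E →ₗ[ℝ] E), dα x v w ≠ 0) :
    ∃ ε₀ : ℝ, 0 < ε₀ ∧ ∀ ε : ℝ, 0 < ε → ε ≤ ε₀ →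
      (∀ x, 0 < (α x + ε • η x) (R x)) ∧
      (∀ x w, (dα x + ε • dη x) (R x) w = 0) ∧
      (∀ x, ∀ v ∈ LinearMap.range (P x : E →ₗ[ℝ] E), v ≠ 0 →
        ∃ w ∈ LinearMap.range (P x : E →ₗ[ℝ] E), (dα x + ε • dη x) v w ≠ 0) :=
  presymplectic_confoliation_plus_small_connection_is_contact_general R α η dα dη hdα hdη hReeb
    hconfol hconn1 hconn2 P hP hPproj hnondeg
end
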